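/- If f : [0,T]^2 → ℝ is continuous and of finite controlled p-variation, then there exists a 2D control ω such that |f(R)|^p ≤ ω(R) for all rectangles R ⊆ [0,T]^2. -/

import Mathlib

open Set
open scoped ENNReal NNReal

/-- A closed rectangle `[a,b] × [c,d] ⊆ ℝ²`, encoded by its four corner coordinates. -/
structure Rect where
  a : ℝ
  b : ℝ
  c : ℝ
  d : ℝ

noncomputable instance : DecidableEq Rect := fun _ _ => Classical.dec _

/-- The closed rectangle as a subset of the plane. -/
def Rect.toSet (R : Rect) : Set (ℝ × ℝ) := Set.Icc R.a R.b ×ˢ Set.Icc R.c R.d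

/-- The open interior of the rectangle. -/
def Rect.openSet (R : Rect) : Set (ℝ × ℝ) := Set.Ioo R.a R.b ×ˢ Set.Ioo R.c R.d

/-- The rectangle is well formed: `a ≤ b`, `c ≤ d`. -/
def Rect.Valid (R : Rect) : Prop := R.a ≤ R.b ∧ R.c ≤ R.d

/-- Rectangular increment of `f` over `[a,b] × [c,d]`. -/
def Rect.inc (f : ℝ × ℝ → ℝ) (R : Rect) : ℝ :=
  f (R.b, R.d) - f (R.a, R.d) - f (R.b, R.c) + f (R.a, R.c)

/-- `P` is a partition of `R` into essentially disjoint rectangles. -/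
def IsPartition (R : Rect) (P : Finset Rect) : Prop :=
  (∀ Q ∈ P, Q.Valid) ∧
  ((P : Set Rect).Pairwise fun Q Q' => Disjoint Q.openSet Q'.openSet) ∧
  (⋃ Q ∈ P, Q.toSet) = R.toSet

/-- The controlled `p`-variation of `f` over `R`, raised to the power `p`:
`sup` over all partitions of `R` into essentially disjoint rectangles of
`Σ |f(A)|^p`.  So `|f|_{p-var;R} = (cVarSum p f R) ^ (1/p)`. -/
noncomputable def cVarSum (p : ℝ) (f : ℝ × ℝ → ℝ) (R : Rect) : ℝ≥0∞ :=
  ⨆ (P : Finset Rect) (_ : IsPartition R P),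
    ∑ Q ∈ P, ENNReal.ofReal |Rect.inc f Q| ^ p

/-- The grid `p`-variation of `f` over `R`, raised to the power `p`:
`sup` over grid-like partitions (products of dissections of the two sides)
of `Σ_{i,j} |f([t_i,t_{i+1}] × [s_j,s_{j+1}])|^p`.
So `V_p(f;R) = (gridVarSum p f R) ^ (1/p)`. -/
noncomputable def gridVarSum (p : ℝ) (f : ℝ × ℝ → ℝ) (R : Rect) : ℝ≥0∞ :=
  ⨆ (n : ℕ) (m : ℕ) (t : Fin (n+1) → ℝ) (s : Fin (m+1) → ℝ)
    (_ : Monotone t) (_ : Monotone s)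
    (_ : t 0 = R.a) (_ : t (Fin.last n) = R.b)
    (_ : s 0 = R.c) (_ : s (Fin.last m) = R.d),
    ∑ i : Fin n, ∑ j : Fin m,
      ENNReal.ofReal |Rect.inc f ⟨t i.castSucc, t i.succ, s j.castSucc, s j.succ⟩| ^ p

/-- The set `Δ_T × Δ_T` of (coordinates of) rectangles contained in `[0,T]²`. -/
def DeltaSq (T : ℝ) : Set (ℝ × ℝ × ℝ × ℝ) :=
  {x | 0 ≤ x.1 ∧ x.1 ≤ x.2.1 ∧ x.2.1 ≤ T ∧
       0 ≤ x.2.2.1 ∧ x.2.2.1 ≤ x.2.2.2 ∧ x.2.2.2 ≤ T}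

/-- `ω` is a 2D control on `[0,T]²`: finite `[0,∞)`-valued, continuous as a function of
the four corner coordinates on `Δ_T × Δ_T`, zero on degenerate rectangles, and
super-additive over finite partitions into essentially disjoint rectangles. -/
def Is2DControl (T : ℝ) (ω : Rect → ℝ≥0∞) : Prop :=
  (∀ R : Rect, R.toSet ⊆ (Rect.mk 0 T 0 T).toSet → ω R ≠ ⊤) ∧
  ContinuousOn (fun x : ℝ × ℝ × ℝ × ℝ => ω ⟨x.1, x.2.1, x.2.2.1, x.2.2.2⟩) (DeltaSq T) ∧
  (∀ R : Rect, R.Valid → (R.a = R.b ∨ R.c = R.d) → ω R = 0) ∧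
  (∀ R : Rect, R.Valid → R.toSet ⊆ (Rect.mk 0 T 0 T).toSet →
    ∀ P : Finset Rect, IsPartition R P → ∑ Q ∈ P, ω Q ≤ ω R)

/-!
The control is `packVar p f`: the supremum of `∑ |f(Q)|^p` over finite packings of a rectangle by
nondegenerate rectangles with disjoint interiors. Superadditivity, domination of `|f(R)|^p` and
vanishing on degenerate rectangles are immediate, and it is finite because a packing of `[0,T]²`
extends to a partition. Continuity is the real content. By Minkowski's inequality
`packVar p f ^ p⁻¹` is subadditive under cutting a rectangle by a line, so its values at two nearby
rectangles differ by at most its values on four thin strips; and it is small on thin strips because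
`f` is continuous.
-/

open Filter Topology

lemma ENNReal.finsetSum_iSup_le {α ι : Type*} [Nonempty ι] {s : Finset α}
    {g : α → ι → ℝ≥0∞} {x : ℝ≥0∞} (h : ∀ c : α → ι, ∑ a ∈ s, g a (c a) ≤ x) :
    ∑ a ∈ s, ⨆ i, g a i ≤ x := by
  classical
  suffices ∀ y, (∀ c : α → ι, y + ∑ a ∈ s, g a (c a) ≤ x) → y + ∑ a ∈ s, ⨆ i, g a i ≤ x by
    simpa using this 0 (by simpa using h)
  clear h
  induction s using Finset.cons_induction with
  | empty => exact fun y hy => by simpa using hy (Classical.arbitrary _)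
  | cons a s ha ih =>
    intro y hy
    rw [Finset.sum_cons, ← add_assoc, ENNReal.add_iSup, ENNReal.iSup_add]
    refine iSup_le fun i => ih _ fun c => ?_
    have := hy (Function.update c a i)
    rwa [Finset.sum_cons, Function.update_self, Finset.sum_congr rfl fun b hb => by
      rw [Function.update_of_ne (ne_of_mem_of_not_mem hb ha)], ← add_assoc] at this

namespace Rect

def Nondeg (R : Rect) : Prop := R.a < R.b ∧ R.c < R.d

variable {Q R : Rect}

lemma Nondeg.valid (h : R.Nondeg) : R.Valid := ⟨h.1.le, h.2.le⟩

lemma Nondeg.openSet_nonempty (h : R.Nondeg) : R.openSet.Nonempty :=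
  (nonempty_Ioo.2 h.1).prod (nonempty_Ioo.2 h.2)

lemma toSet_subset_toSet (ha : R.a ≤ Q.a) (hb : Q.b ≤ R.b) (hc : R.c ≤ Q.c) (hd : Q.d ≤ R.d) :
    Q.toSet ⊆ R.toSet :=
  prod_mono (Icc_subset_Icc ha hb) (Icc_subset_Icc hc hd)

lemma openSet_subset_openSet (ha : R.a ≤ Q.a) (hb : Q.b ≤ R.b) (hc : R.c ≤ Q.c)
    (hd : Q.d ≤ R.d) : Q.openSet ⊆ R.openSet :=
  prod_mono (Ioo_subset_Ioo ha hb) (Ioo_subset_Ioo hc hd)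

lemma le_of_toSet_subset (hQ : Q.Valid) (h : Q.toSet ⊆ R.toSet) :
    R.a ≤ Q.a ∧ Q.b ≤ R.b ∧ R.c ≤ Q.c ∧ Q.d ≤ R.d := by
  have hac := h (mk_mem_prod (left_mem_Icc.2 hQ.1) (left_mem_Icc.2 hQ.2))
  have hbd := h (mk_mem_prod (right_mem_Icc.2 hQ.1) (right_mem_Icc.2 hQ.2))
  exact ⟨hac.1.1, hbd.1.2, hac.2.1, hbd.2.2⟩

lemma openSet_subset_of_toSet_subset (hQ : Q.Valid) (h : Q.toSet ⊆ R.toSet) :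
    Q.openSet ⊆ R.openSet :=
  have ⟨ha, hb, hc, hd⟩ := le_of_toSet_subset hQ h
  openSet_subset_openSet ha hb hc hd

lemma Nondeg.mono (hQ : Q.Nondeg) (h : Q.toSet ⊆ R.toSet) : R.Nondeg :=
  have ⟨ha, hb, hc, hd⟩ := le_of_toSet_subset hQ.valid h
  ⟨ha.trans_lt (hQ.1.trans_le hb), hc.trans_lt (hQ.2.trans_le hd)⟩

lemma inc_eq_zero_of_not_nondeg (f : ℝ × ℝ → ℝ) (hQ : Q.Valid) (h : ¬Q.Nondeg) :
    Q.inc f = 0 := by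
  rcases not_and_or.1 h with h | h
  · rw [inc, le_antisymm hQ.1 (not_lt.1 h)]; ring
  · rw [inc, le_antisymm hQ.2 (not_lt.1 h)]; ring

lemma rpow_inc_eq_zero_of_not_nondeg {p : ℝ} (hp : 0 < p) (f : ℝ × ℝ → ℝ) (hQ : Q.Valid)
    (h : ¬Q.Nondeg) : ENNReal.ofReal |Q.inc f| ^ p = 0 := by
  simp [inc_eq_zero_of_not_nondeg f hQ h, ENNReal.zero_rpow_of_pos hp]

-- The cut `t` is clamped to `[Q.a, Q.b]`, so both parts are subrectangles of `Q` for every `t`.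
def leftPart (Q : Rect) (t : ℝ) : Rect := ⟨Q.a, Q.a ⊔ (t ⊓ Q.b), Q.c, Q.d⟩

def rightPart (Q : Rect) (t : ℝ) : Rect := ⟨Q.a ⊔ (t ⊓ Q.b), Q.b, Q.c, Q.d⟩

variable {t : ℝ}

lemma inc_leftPart_add_inc_rightPart (f : ℝ × ℝ → ℝ) :
    (Q.leftPart t).inc f + (Q.rightPart t).inc f = Q.inc f := by
  simp only [inc, leftPart, rightPart]; ring

lemma leftPart_valid (hQ : Q.Valid) : (Q.leftPart t).Valid :=
  ⟨le_sup_left, hQ.2⟩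

lemma rightPart_valid (hQ : Q.Valid) : (Q.rightPart t).Valid :=
  ⟨sup_le hQ.1 inf_le_right, hQ.2⟩

lemma openSet_leftPart_subset (hQ : Q.Valid) : (Q.leftPart t).openSet ⊆ Q.openSet :=
  openSet_subset_openSet le_rfl (sup_le hQ.1 inf_le_right) le_rfl le_rfl

lemma openSet_rightPart_subset : (Q.rightPart t).openSet ⊆ Q.openSet :=
  openSet_subset_openSet le_sup_left le_rfl le_rfl le_rfl

lemma toSet_leftPart_subset (hQ : Q.toSet ⊆ R.toSet) (hQ' : Q.Valid) (h : (Q.leftPart t).Nondeg) :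
    (Q.leftPart t).toSet ⊆ (⟨R.a, t, R.c, R.d⟩ : Rect).toSet := by
  obtain ⟨ha, -, hc, hd⟩ := le_of_toSet_subset hQ' hQ
  have : Q.a < Q.a ⊔ (t ⊓ Q.b) := h.1
  exact toSet_subset_toSet ha (by simp only [leftPart]; grind) hc hd

lemma toSet_rightPart_subset (hQ : Q.toSet ⊆ R.toSet) (hQ' : Q.Valid)
    (h : (Q.rightPart t).Nondeg) :
    (Q.rightPart t).toSet ⊆ (⟨t, R.b, R.c, R.d⟩ : Rect).toSet := by
  obtain ⟨-, hb, hc, hd⟩ := le_of_toSet_subset hQ' hQ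
  have : Q.a ⊔ (t ⊓ Q.b) < Q.b := h.1
  exact toSet_subset_toSet (by simp only [rightPart]; grind) hb hc hd

lemma leftPart_of_le (hQ : Q.Valid) (ht : Q.b ≤ t) : Q.leftPart t = Q := by
  simp [leftPart, inf_eq_right.2 ht, hQ.1]

lemma continuous_inc_leftPart {f : ℝ × ℝ → ℝ} (hf : ContinuousOn f R.toSet) (hQ : Q.Valid)
    (hQR : Q.toSet ⊆ R.toSet) : Continuous fun t => (Q.leftPart t).inc f := by
  have hside : ∀ y ∈ Icc Q.c Q.d, Continuous fun t => f (Q.a ⊔ (t ⊓ Q.b), y) := fun y hy =>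
    hf.comp_continuous (by fun_prop) fun t => hQR ⟨⟨le_sup_left, sup_le hQ.1 inf_le_right⟩, hy⟩
  simp only [inc, leftPart]
  exact (((hside _ (right_mem_Icc.2 hQ.2)).sub continuous_const).sub
    (hside _ (left_mem_Icc.2 hQ.2))).add continuous_const

end Rect

def IsPacking (R : Rect) (F : Finset Rect) : Prop :=
  (∀ Q ∈ F, Q.Nondeg ∧ Q.toSet ⊆ R.toSet) ∧
  (F : Set Rect).Pairwise fun Q Q' => Disjoint Q.openSet Q'.openSet

noncomputable def incPowSum (p : ℝ) (f : ℝ × ℝ → ℝ) (F : Finset Rect) : ℝ≥0∞ :=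
  ∑ Q ∈ F, ENNReal.ofReal |Q.inc f| ^ p

noncomputable def packVar (p : ℝ) (f : ℝ × ℝ → ℝ) (R : Rect) : ℝ≥0∞ :=
  ⨆ (F : Finset Rect) (_ : IsPacking R F), incPowSum p f F

namespace IsPacking

variable {R R' : Rect} {F : Finset Rect}

lemma empty (R : Rect) : IsPacking R ∅ := ⟨by simp, by simp⟩

lemma singleton (hR : R.Nondeg) : IsPacking R {R} := ⟨by simp [hR], by simp⟩

lemma mono (hF : IsPacking R F) (h : R.toSet ⊆ R'.toSet) : IsPacking R' F :=
  ⟨fun Q hQ => ⟨(hF.1 Q hQ).1, (hF.1 Q hQ).2.trans h⟩, hF.2⟩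

lemma openSet_subset (hF : IsPacking R F) {Q : Rect} (hQ : Q ∈ F) : Q.openSet ⊆ R.openSet :=
  Rect.openSet_subset_of_toSet_subset (hF.1 Q hQ).1.valid (hF.1 Q hQ).2

lemma disjoint (hF : IsPacking R F) {F' : Finset Rect} (hF' : IsPacking R' F')
    (h : Disjoint R.openSet R'.openSet) : Disjoint F F' :=
  Finset.disjoint_left.2 fun Q hQ hQ' =>
    have ⟨_, hz⟩ := (hF.1 Q hQ).1.openSet_nonempty
    Set.disjoint_left.1 h (hF.openSet_subset hQ hz) (hF'.openSet_subset hQ' hz)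

end IsPacking

section PackVar

variable {p : ℝ} {f : ℝ × ℝ → ℝ} {R R' : Rect} {F : Finset Rect}

lemma incPowSum_le_packVar (hF : IsPacking R F) : incPowSum p f F ≤ packVar p f R :=
  le_iSup₂ (f := fun F (_ : IsPacking R F) => incPowSum p f F) F hF

lemma packVar_le {x : ℝ≥0∞} (h : ∀ F, IsPacking R F → incPowSum p f F ≤ x) :
    packVar p f R ≤ x :=
  iSup₂_le h

lemma packVar_mono (h : R.toSet ⊆ R'.toSet) : packVar p f R ≤ packVar p f R' :=
  packVar_le fun _ hF => incPowSum_le_packVar (hF.mono h)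

lemma packVar_eq_zero_of_not_nondeg (hR : ¬R.Nondeg) : packVar p f R = 0 := by
  refine le_antisymm (packVar_le fun F hF => ?_) zero_le
  rw [Finset.eq_empty_of_forall_notMem fun Q hQ => hR ((hF.1 Q hQ).1.mono (hF.1 Q hQ).2)]
  simp [incPowSum]

lemma rpow_inc_le_packVar (hp : 0 < p) (hR : R.Valid) :
    ENNReal.ofReal |R.inc f| ^ p ≤ packVar p f R := by
  by_cases hnd : R.Nondeg
  · simpa [incPowSum] using incPowSum_le_packVar (p := p) (f := f) (IsPacking.singleton hnd)
  · simp [Rect.rpow_inc_eq_zero_of_not_nondeg hp f hR hnd]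

lemma exists_isPacking_le_add (hR : packVar p f R ≠ ⊤) {δ : ℝ≥0∞} (hδ : δ ≠ 0) :
    ∃ F, IsPacking R F ∧ packVar p f R ≤ incPowSum p f F + δ := by
  rcases eq_or_ne (packVar p f R) 0 with h0 | h0
  · exact ⟨∅, IsPacking.empty R, by simp [h0]⟩
  obtain ⟨F, hlt⟩ := lt_iSup_iff.1 (ENNReal.sub_lt_self hR h0 hδ)
  obtain ⟨hF, hlt⟩ := lt_iSup_iff.1 hlt
  exact ⟨F, hF, tsub_le_iff_right.1 hlt.le⟩

theorem sum_packVar_le {ι : Type*} {s : Finset ι} {Q : ι → Rect}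
    (hsub : ∀ i ∈ s, (Q i).toSet ⊆ R.toSet)
    (hdisj : (s : Set ι).Pairwise fun i j => Disjoint (Q i).openSet (Q j).openSet) :
    ∑ i ∈ s, packVar p f (Q i) ≤ packVar p f R := by
  classical
  refine ENNReal.finsetSum_iSup_le fun F => ?_
  set t := s.filter fun i => IsPacking (Q i) (F i)
  have hF : ∀ i ∈ t, IsPacking (Q i) (F i) := fun i hi => (Finset.mem_filter.1 hi).2
  have hsub' : ∀ i ∈ t, (Q i).toSet ⊆ R.toSet := fun i hi => hsub i (Finset.filter_subset _ _ hi)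
  have hdisj' : (t : Set ι).Pairwise fun i j => Disjoint (Q i).openSet (Q j).openSet :=
    hdisj.mono (Finset.coe_subset.2 (Finset.filter_subset _ _))
  have hpack : IsPacking R (t.biUnion F) := by
    refine ⟨fun G hG => ?_, fun G hG G' hG' hne => ?_⟩
    · obtain ⟨i, hi, hGi⟩ := Finset.mem_biUnion.1 hG
      exact ⟨((hF i hi).1 G hGi).1, ((hF i hi).1 G hGi).2.trans (hsub' i hi)⟩
    · obtain ⟨i, hi, hGi⟩ := Finset.mem_biUnion.1 hG
      obtain ⟨j, hj, hGj⟩ := Finset.mem_biUnion.1 hG'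
      rcases eq_or_ne i j with rfl | hij
      · exact (hF i hi).2 hGi hGj hne
      · exact (hdisj' hi hj hij).mono ((hF i hi).openSet_subset hGi)
          ((hF j hj).openSet_subset hGj)
  calc ∑ i ∈ s, ⨆ (_ : IsPacking (Q i) (F i)), incPowSum p f (F i)
      = ∑ i ∈ t, incPowSum p f (F i) := by
        simp only [iSup_eq_if, bot_eq_zero', Finset.sum_filter, t]
    _ = incPowSum p f (t.biUnion F) :=
        (Finset.sum_biUnion fun i hi j hj hij =>
          (hF i hi).disjoint (hF j hj) (hdisj' hi hj hij)).symm
    _ ≤ packVar p f R := incPowSum_le_packVar hpack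

theorem packVar_add_packVar_le {A B : Rect} (hA : A.toSet ⊆ R.toSet) (hB : B.toSet ⊆ R.toSet)
    (h : Disjoint A.openSet B.openSet) : packVar p f A + packVar p f B ≤ packVar p f R := by
  have := sum_packVar_le (p := p) (f := f) (R := R) (s := Finset.univ)
    (Q := fun i : Bool => cond i A B) (by simp [hA, hB]) (by rintro (_ | _) - (_ | _) - hij <;> simp_all [h.symm])
  simpa [add_comm] using this

end PackVar

def IsGap (X : Finset ℝ) (x y : ℝ) : Prop := x ∈ X ∧ y ∈ X ∧ x < y ∧ ∀ z ∈ X, z ≤ x ∨ y ≤ z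

lemma exists_isGap_mem_Icc {X : Finset ℝ} {a b x : ℝ} (ha : a ∈ X) (hb : b ∈ X) (hab : a < b)
    (hx : x ∈ Icc a b) : ∃ x₁ x₂, IsGap X x₁ x₂ ∧ x ∈ Icc x₁ x₂ := by
  classical
  set S₁ := X.filter fun z => z ≤ x ∧ z < b
  have hS₁ : S₁.Nonempty := ⟨a, Finset.mem_filter.2 ⟨ha, hx.1, hab⟩⟩
  obtain ⟨hx₁X, hx₁x, hx₁b⟩ := Finset.mem_filter.1 (S₁.max'_mem hS₁)
  set S₂ := X.filter fun z => S₁.max' hS₁ < z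
  have hS₂ : S₂.Nonempty := ⟨b, Finset.mem_filter.2 ⟨hb, hx₁b⟩⟩
  obtain ⟨hx₂X, hx₁₂⟩ := Finset.mem_filter.1 (S₂.min'_mem hS₂)
  refine ⟨S₁.max' hS₁, S₂.min' hS₂, ⟨hx₁X, hx₂X, hx₁₂, fun z hz => ?_⟩, hx₁x, ?_⟩
  · exact (le_or_gt z _).imp_right fun h => S₂.min'_le z (Finset.mem_filter.2 ⟨hz, h⟩)
  · by_contra! h
    exact (S₁.le_max' _ (Finset.mem_filter.2 ⟨hx₂X, h.le, h.trans_le hx.2⟩)).not_gt hx₁₂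

lemma IsGap.le_and_le {X : Finset ℝ} {x₁ x₂ u v : ℝ} (h : IsGap X x₁ x₂) (hu : u ∈ X)
    (hv : v ∈ X) (hw : (Ioo x₁ x₂ ∩ Ioo u v).Nonempty) : u ≤ x₁ ∧ x₂ ≤ v := by
  obtain ⟨w, ⟨hw₁, hw₂⟩, hw₃, hw₄⟩ := hw
  exact ⟨(h.2.2.2 u hu).resolve_right fun h' => by linarith,
    (h.2.2.2 v hv).resolve_left fun h' => by linarith⟩

open Classical in
noncomputable def gridCells (X Y : Finset ℝ) : Finset Rect :=
  ((X ×ˢ X ×ˢ Y ×ˢ Y).image fun q => (⟨q.1, q.2.1, q.2.2.1, q.2.2.2⟩ : Rect)).filter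
    fun C => IsGap X C.a C.b ∧ IsGap Y C.c C.d

section GridCells

variable {X Y : Finset ℝ} {C Q R : Rect}

lemma mem_gridCells : C ∈ gridCells X Y ↔ IsGap X C.a C.b ∧ IsGap Y C.c C.d := by
  simp only [gridCells, Finset.mem_filter, Finset.mem_image, Finset.mem_product]
  exact ⟨And.right, fun h => ⟨⟨(C.a, C.b, C.c, C.d), ⟨h.1.1, h.1.2.1, h.2.1, h.2.2.1⟩, rfl⟩, h⟩⟩

lemma toSet_subset_of_mem_gridCells (hC : C ∈ gridCells X Y) (ha : Q.a ∈ X) (hb : Q.b ∈ X)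
    (hc : Q.c ∈ Y) (hd : Q.d ∈ Y) (h : ¬Disjoint C.openSet Q.openSet) : C.toSet ⊆ Q.toSet := by
  obtain ⟨z, hz, hz'⟩ := Set.not_disjoint_iff.1 h
  rw [mem_gridCells] at hC
  obtain ⟨h₁, h₂⟩ := hC.1.le_and_le ha hb ⟨z.1, hz.1, hz'.1⟩
  obtain ⟨h₃, h₄⟩ := hC.2.le_and_le hc hd ⟨z.2, hz.2, hz'.2⟩
  exact Rect.toSet_subset_toSet h₁ h₂ h₃ h₄

lemma gridCells_pairwise_disjoint :
    (gridCells X Y : Set Rect).Pairwise fun C C' => Disjoint C.openSet C'.openSet := by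
  intro C hC C' hC' hne
  by_contra h
  have hC₁ := mem_gridCells.1 hC
  have hC₂ := mem_gridCells.1 hC'
  obtain ⟨ha, hb, hc, hd⟩ := Rect.le_of_toSet_subset ⟨hC₁.1.2.2.1.le, hC₁.2.2.2.1.le⟩
    (toSet_subset_of_mem_gridCells hC hC₂.1.1 hC₂.1.2.1 hC₂.2.1 hC₂.2.2.1 h)
  obtain ⟨ha', hb', hc', hd'⟩ := Rect.le_of_toSet_subset ⟨hC₂.1.2.2.1.le, hC₂.2.2.2.1.le⟩
    (toSet_subset_of_mem_gridCells hC' hC₁.1.1 hC₁.1.2.1 hC₁.2.1 hC₁.2.2.1 fun h' => h h'.symm)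
  obtain ⟨a, b, c, d⟩ := C
  obtain ⟨a', b', c', d'⟩ := C'
  simp only at *
  exact hne (by rw [le_antisymm ha ha', le_antisymm hb' hb, le_antisymm hc hc', le_antisymm hd' hd])

lemma exists_mem_gridCells (ha : R.a ∈ X) (hb : R.b ∈ X) (hc : R.c ∈ Y) (hd : R.d ∈ Y)
    (hR : R.Nondeg) {z : ℝ × ℝ} (hz : z ∈ R.toSet) : ∃ C ∈ gridCells X Y, z ∈ C.toSet := by
  obtain ⟨x₁, x₂, hx, hzx⟩ := exists_isGap_mem_Icc ha hb hR.1 hz.1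
  obtain ⟨y₁, y₂, hy, hzy⟩ := exists_isGap_mem_Icc hc hd hR.2 hz.2
  exact ⟨⟨x₁, x₂, y₁, y₂⟩, mem_gridCells.2 ⟨hx, hy⟩, hzx, hzy⟩

end GridCells

/-- The cells of the grid spanned by the sides of `R` and of the rectangles of `F` that avoid
the interiors of those rectangles complete `F` to a partition. -/
theorem IsPacking.exists_isPartition_superset {R : Rect} {F : Finset Rect} (hF : IsPacking R F)
    (hR : R.Nondeg) : ∃ P, IsPartition R P ∧ F ⊆ P := by
  classical
  set X := insert R.a (insert R.b (F.image Rect.a ∪ F.image Rect.b))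
  set Y := insert R.c (insert R.d (F.image Rect.c ∪ F.image Rect.d))
  have hFXY : ∀ Q ∈ F, Q.a ∈ X ∧ Q.b ∈ X ∧ Q.c ∈ Y ∧ Q.d ∈ Y := fun Q hQ => by
    simp only [X, Y, Finset.mem_insert, Finset.mem_union, Finset.mem_image]
    exact ⟨.inr (.inr (.inl ⟨Q, hQ, rfl⟩)), .inr (.inr (.inr ⟨Q, hQ, rfl⟩)),
      .inr (.inr (.inl ⟨Q, hQ, rfl⟩)), .inr (.inr (.inr ⟨Q, hQ, rfl⟩))⟩
  have hcoord : ∀ Q ∈ F, R.a ≤ Q.a ∧ Q.b ≤ R.b ∧ R.c ≤ Q.c ∧ Q.d ≤ R.d := fun Q hQ =>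
    Rect.le_of_toSet_subset (hF.1 Q hQ).1.valid (hF.1 Q hQ).2
  have hX : ∀ x ∈ X, x ∈ Icc R.a R.b := by
    simp only [X, Finset.mem_insert, Finset.mem_union, Finset.mem_image]
    rintro x (rfl | rfl | ⟨Q, hQ, rfl⟩ | ⟨Q, hQ, rfl⟩)
    · exact ⟨le_rfl, hR.1.le⟩
    · exact ⟨hR.1.le, le_rfl⟩
    · exact ⟨(hcoord Q hQ).1, (hF.1 Q hQ).1.1.le.trans (hcoord Q hQ).2.1⟩
    · exact ⟨(hcoord Q hQ).1.trans (hF.1 Q hQ).1.1.le, (hcoord Q hQ).2.1⟩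
  have hY : ∀ y ∈ Y, y ∈ Icc R.c R.d := by
    simp only [Y, Finset.mem_insert, Finset.mem_union, Finset.mem_image]
    rintro y (rfl | rfl | ⟨Q, hQ, rfl⟩ | ⟨Q, hQ, rfl⟩)
    · exact ⟨le_rfl, hR.2.le⟩
    · exact ⟨hR.2.le, le_rfl⟩
    · exact ⟨(hcoord Q hQ).2.2.1, (hF.1 Q hQ).1.2.le.trans (hcoord Q hQ).2.2.2⟩
    · exact ⟨(hcoord Q hQ).2.2.1.trans (hF.1 Q hQ).1.2.le, (hcoord Q hQ).2.2.2⟩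
  set cells := (gridCells X Y).filter fun C => ∀ Q ∈ F, Disjoint C.openSet Q.openSet
  have hcells : ∀ C ∈ cells, C ∈ gridCells X Y ∧ ∀ Q ∈ F, Disjoint C.openSet Q.openSet :=
    fun C hC => Finset.mem_filter.1 hC
  refine ⟨F ∪ cells, ⟨fun Q hQ => ?_, fun Q hQ Q' hQ' hne => ?_, ?_⟩, Finset.subset_union_left⟩
  · rcases Finset.mem_union.1 hQ with hQ | hQ
    · exact (hF.1 Q hQ).1.valid
    · have hQ := mem_gridCells.1 (hcells Q hQ).1
      exact ⟨hQ.1.2.2.1.le, hQ.2.2.2.1.le⟩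
  · rcases Finset.mem_union.1 hQ with hQ | hQ <;> rcases Finset.mem_union.1 hQ' with hQ' | hQ'
    · exact hF.2 hQ hQ' hne
    · exact ((hcells Q' hQ').2 Q hQ).symm
    · exact (hcells Q hQ).2 Q' hQ'
    · exact gridCells_pairwise_disjoint (hcells Q hQ).1 (hcells Q' hQ').1 hne
  refine subset_antisymm (iUnion₂_subset fun Q hQ => ?_) fun z hz => ?_
  · rcases Finset.mem_union.1 hQ with hQ | hQ
    · exact (hF.1 Q hQ).2
    · have hQ := mem_gridCells.1 (hcells Q hQ).1
      exact Rect.toSet_subset_toSet (hX _ hQ.1.1).1 (hX _ hQ.1.2.1).2 (hY _ hQ.2.1).1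
        (hY _ hQ.2.2.1).2
  obtain ⟨C, hC, hzC⟩ := exists_mem_gridCells (X := X) (Y := Y) (by simp [X]) (by simp [X])
    (by simp [Y]) (by simp [Y]) hR hz
  by_cases hdisj : ∀ Q ∈ F, Disjoint C.openSet Q.openSet
  · exact mem_iUnion₂.2 ⟨C, Finset.mem_union_right _ (Finset.mem_filter.2 ⟨hC, hdisj⟩), hzC⟩
  · push Not at hdisj
    obtain ⟨Q, hQ, hCQ⟩ := hdisj
    obtain ⟨ha, hb, hc, hd⟩ := hFXY Q hQ
    exact mem_iUnion₂.2 ⟨Q, Finset.mem_union_left _ hQ,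
      toSet_subset_of_mem_gridCells hC ha hb hc hd hCQ hzC⟩

theorem packVar_le_cVarSum (p : ℝ) (f : ℝ × ℝ → ℝ) (R : Rect) :
    packVar p f R ≤ cVarSum p f R := by
  by_cases hR : R.Nondeg
  · refine packVar_le fun F hF => ?_
    obtain ⟨P, hP, hFP⟩ := hF.exists_isPartition_superset hR
    exact (Finset.sum_le_sum_of_subset hFP).trans
      (le_iSup₂ (f := fun P (_ : IsPartition R P) => ∑ Q ∈ P, ENNReal.ofReal |Q.inc f| ^ p) P hP)
  · simp [packVar_eq_zero_of_not_nondeg hR]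

section PackVar

variable {p : ℝ} {f : ℝ × ℝ → ℝ} {R R' : Rect} {F : Finset Rect}

theorem sum_rpow_inc_le_packVar (hp : 0 < p) (hF : IsPacking R F) (g : Rect → Rect)
    (hvalid : ∀ Q ∈ F, (g Q).Valid) (hopen : ∀ Q ∈ F, (g Q).openSet ⊆ Q.openSet)
    (hsub : ∀ Q ∈ F, (g Q).Nondeg → (g Q).toSet ⊆ R'.toSet) :
    ∑ Q ∈ F, ENNReal.ofReal |(g Q).inc f| ^ p ≤ packVar p f R' := by
  classical
  set F' := F.filter fun Q => (g Q).Nondeg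
  have hF' : ∀ Q ∈ F', Q ∈ F ∧ (g Q).Nondeg := fun Q hQ => Finset.mem_filter.1 hQ
  have hinj : Set.InjOn g F' := by
    intro Q hQ Q' hQ' hgQ
    by_contra hne
    obtain ⟨z, hz⟩ := (hF' Q hQ).2.openSet_nonempty
    exact Set.disjoint_left.1 (hF.2 (hF' Q hQ).1 (hF' Q' hQ').1 hne) (hopen Q (hF' Q hQ).1 hz)
      (hopen Q' (hF' Q' hQ').1 (hgQ ▸ hz))
  have hpack : IsPacking R' (F'.image g) := by
    refine ⟨?_, ?_⟩
    · simp only [Finset.mem_image]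
      rintro _ ⟨Q, hQ, rfl⟩
      exact ⟨(hF' Q hQ).2, hsub Q (hF' Q hQ).1 (hF' Q hQ).2⟩
    · simp only [Finset.coe_image]
      rintro _ ⟨Q, hQ, rfl⟩ _ ⟨Q', hQ', rfl⟩ hne
      exact (hF.2 (hF' Q hQ).1 (hF' Q' hQ').1 (ne_of_apply_ne g hne)).mono
        (hopen Q (hF' Q hQ).1) (hopen Q' (hF' Q' hQ').1)
  calc ∑ Q ∈ F, ENNReal.ofReal |(g Q).inc f| ^ p
      = ∑ Q ∈ F', ENNReal.ofReal |(g Q).inc f| ^ p :=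
        (Finset.sum_filter_of_ne fun Q hQ hne => by_contra fun h =>
          hne (Rect.rpow_inc_eq_zero_of_not_nondeg hp f (hvalid Q hQ) h)).symm
    _ = incPowSum p f (F'.image g) := by rw [incPowSum, Finset.sum_image hinj]
    _ ≤ packVar p f R' := incPowSum_le_packVar hpack

lemma sum_rpow_inc_leftPart_le (hp : 0 < p) (hF : IsPacking R F) (t : ℝ) :
    ∑ Q ∈ F, ENNReal.ofReal |(Q.leftPart t).inc f| ^ p ≤ packVar p f ⟨R.a, t, R.c, R.d⟩ :=
  sum_rpow_inc_le_packVar hp hF _ (fun Q hQ => Rect.leftPart_valid (hF.1 Q hQ).1.valid)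
    (fun Q hQ => Rect.openSet_leftPart_subset (hF.1 Q hQ).1.valid)
    (fun Q hQ => Rect.toSet_leftPart_subset (hF.1 Q hQ).2 (hF.1 Q hQ).1.valid)

lemma sum_rpow_inc_rightPart_le (hp : 0 < p) (hF : IsPacking R F) (t : ℝ) :
    ∑ Q ∈ F, ENNReal.ofReal |(Q.rightPart t).inc f| ^ p ≤ packVar p f ⟨t, R.b, R.c, R.d⟩ :=
  sum_rpow_inc_le_packVar hp hF _ (fun Q hQ => Rect.rightPart_valid (hF.1 Q hQ).1.valid)
    (fun _ _ => Rect.openSet_rightPart_subset)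
    (fun Q hQ => Rect.toSet_rightPart_subset (hF.1 Q hQ).2 (hF.1 Q hQ).1.valid)

theorem packVar_rpow_inv_le_split_fst (hp : 1 ≤ p) (R : Rect) (t : ℝ) :
    packVar p f R ^ p⁻¹ ≤
      packVar p f ⟨R.a, t, R.c, R.d⟩ ^ p⁻¹ + packVar p f ⟨t, R.b, R.c, R.d⟩ ^ p⁻¹ := by
  have hp0 : 0 < p := zero_lt_one.trans_le hp
  rw [ENNReal.rpow_inv_le_iff hp0]
  refine packVar_le fun F hF => ?_
  rw [← ENNReal.rpow_inv_le_iff hp0]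
  set l := fun Q : Rect => ENNReal.ofReal |(Q.leftPart t).inc f|
  set r := fun Q : Rect => ENNReal.ofReal |(Q.rightPart t).inc f|
  have htri : ∀ Q : Rect, ENNReal.ofReal |Q.inc f| ≤ l Q + r Q := fun Q => by
    rw [← Rect.inc_leftPart_add_inc_rightPart (t := t)]
    exact (ENNReal.ofReal_le_ofReal (abs_add_le _ _)).trans ENNReal.ofReal_add_le
  calc incPowSum p f F ^ p⁻¹
      ≤ (∑ Q ∈ F, (l Q + r Q) ^ p) ^ p⁻¹ := by
        unfold incPowSum
        gcongr with Q
        exact htri Q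
    _ ≤ (∑ Q ∈ F, l Q ^ p) ^ p⁻¹ + (∑ Q ∈ F, r Q ^ p) ^ p⁻¹ := by
        simpa only [one_div] using ENNReal.Lp_add_le F l r hp
    _ ≤ _ := by
        gcongr
        exacts [sum_rpow_inc_leftPart_le hp0 hF t, sum_rpow_inc_rightPart_le hp0 hF t]

theorem packVar_le_packVar_of_preimage {g : ℝ × ℝ → ℝ} (φ : ℝ × ℝ → ℝ × ℝ) (τ : Rect → Rect)
    (hτ : Function.Injective τ) (htoSet : ∀ Q, (τ Q).toSet = φ ⁻¹' Q.toSet)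
    (hopenSet : ∀ Q, (τ Q).openSet = φ ⁻¹' Q.openSet) (hnondeg : ∀ Q, Q.Nondeg → (τ Q).Nondeg)
    (hinc : ∀ Q, |(τ Q).inc g| = |Q.inc f|) (R : Rect) :
    packVar p f R ≤ packVar p g (τ R) := by
  classical
  refine packVar_le fun F hF => ?_
  have hpack : IsPacking (τ R) (F.image τ) := by
    refine ⟨?_, ?_⟩
    · simp only [Finset.mem_image]
      rintro _ ⟨Q, hQ, rfl⟩
      exact ⟨hnondeg Q (hF.1 Q hQ).1, by rw [htoSet, htoSet]; exact preimage_mono (hF.1 Q hQ).2⟩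
    · simp only [Finset.coe_image]
      rintro _ ⟨Q, hQ, rfl⟩ _ ⟨Q', hQ', rfl⟩ hne
      rw [hopenSet, hopenSet]
      exact (hF.2 hQ hQ' (ne_of_apply_ne τ hne)).preimage φ
  calc incPowSum p f F = incPowSum p g (F.image τ) := by
        simp only [incPowSum, Finset.sum_image hτ.injOn, hinc]
    _ ≤ _ := incPowSum_le_packVar hpack

theorem packVar_comp_swap (a b c d : ℝ) :
    packVar p (f ∘ Prod.swap) ⟨c, d, a, b⟩ = packVar p f ⟨a, b, c, d⟩ := by
  have key : ∀ (g : ℝ × ℝ → ℝ) (R : Rect),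
      packVar p g R ≤ packVar p (g ∘ Prod.swap) ⟨R.c, R.d, R.a, R.b⟩ := fun g =>
    packVar_le_packVar_of_preimage Prod.swap (fun Q => ⟨Q.c, Q.d, Q.a, Q.b⟩)
      (fun Q Q' h => by cases Q; cases Q'; simp_all)
      (fun _ => (preimage_swap_prod _ _).symm) (fun _ => (preimage_swap_prod _ _).symm)
      (fun _ h => ⟨h.2, h.1⟩) (fun Q => by simp only [Rect.inc, Function.comp, Prod.swap]; ring_nf)
  refine le_antisymm ?_ (key f ⟨a, b, c, d⟩)
  simpa [Function.comp_assoc] using key (f ∘ Prod.swap) ⟨c, d, a, b⟩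

theorem packVar_comp_neg_fst (a b c d : ℝ) :
    packVar p (fun z => f (-z.1, z.2)) ⟨-b, -a, c, d⟩ = packVar p f ⟨a, b, c, d⟩ := by
  have key : ∀ (g : ℝ × ℝ → ℝ) (R : Rect),
      packVar p g R ≤ packVar p (fun z => g (-z.1, z.2)) ⟨-R.b, -R.a, R.c, R.d⟩ := fun g =>
    packVar_le_packVar_of_preimage (fun z => (-z.1, z.2)) (fun Q => ⟨-Q.b, -Q.a, Q.c, Q.d⟩)
      (fun Q Q' h => by cases Q; cases Q'; simp_all)
      (fun Q => by ext ⟨x, y⟩; simp [Rect.toSet, neg_le, le_neg]; tauto)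
      (fun Q => by ext ⟨x, y⟩; simp [Rect.openSet, neg_lt, lt_neg]; tauto)
      (fun _ h => ⟨neg_lt_neg h.1, h.2⟩)
      (fun Q => by rw [← abs_neg]; simp only [Rect.inc, neg_neg]; ring_nf)
  refine le_antisymm ?_ (key f ⟨a, b, c, d⟩)
  simpa using key (fun z => f (-z.1, z.2)) ⟨-b, -a, c, d⟩

/-- Cut a packing that nearly attains `packVar p f R` along `x = R.b - η`. Its sum changes
continuously with `η`, and the cut packing lies in `[R.a, R.b - η] × [R.c, R.d]`, whose interior
misses the strip; superadditivity then bounds the value on the strip by the small loss. -/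
theorem tendsto_packVar_rightStrip (hp : 0 < p) (hf : ContinuousOn f R.toSet)
    (hR : packVar p f R ≠ ⊤) :
    Tendsto (fun η => packVar p f ⟨(R.b - η) ⊔ R.a, R.b, R.c, R.d⟩) (𝓝[>] 0) (𝓝 0) := by
  refine ENNReal.tendsto_nhds_zero.2 fun γ hγ => ?_
  have hγ2 : γ / 2 ≠ 0 := (ENNReal.half_pos hγ.ne').ne'
  obtain ⟨F, hF, hRF⟩ := exists_isPacking_le_add hR hγ2
  set S := fun η : ℝ => ∑ Q ∈ F, ENNReal.ofReal |(Q.leftPart (R.b - η)).inc f| ^ p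
  have hS0 : S 0 = incPowSum p f F := Finset.sum_congr rfl fun Q hQ => by
    have hQ' := (hF.1 Q hQ).1.valid
    rw [sub_zero, Rect.leftPart_of_le hQ' (Rect.le_of_toSet_subset hQ' (hF.1 Q hQ).2).2.1]
  have hS : Continuous S := continuous_finsetSum _ fun Q hQ =>
    ENNReal.continuous_rpow_const.comp (ENNReal.continuous_ofReal.comp
      ((Rect.continuous_inc_leftPart hf (hF.1 Q hQ).1.valid (hF.1 Q hQ).2).comp
        (continuous_sub_left _)).abs)
  have hS0fin : S 0 ≠ ⊤ := hS0 ▸ ne_top_of_le_ne_top hR (incPowSum_le_packVar hF)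
  filter_upwards [self_mem_nhdsWithin, nhdsWithin_le_nhds
    ((ENNReal.tendsto_nhds hS0fin).1 (hS.tendsto 0) _ (pos_iff_ne_zero.2 hγ2))] with η hη hSη
  set M : Rect := ⟨R.a, R.b - η, R.c, R.d⟩
  set B : Rect := ⟨(R.b - η) ⊔ R.a, R.b, R.c, R.d⟩
  have hMR : M.toSet ⊆ R.toSet :=
    Rect.toSet_subset_toSet le_rfl (by linarith [mem_Ioi.1 hη]) le_rfl le_rfl
  have hMfin : packVar p f M ≠ ⊤ := ne_top_of_le_ne_top hR (packVar_mono hMR)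
  have hdisj : Disjoint M.openSet B.openSet :=
    Set.disjoint_left.2 fun z hz hz' => lt_irrefl _ <|
      hz.1.2.trans_le le_sup_left |>.trans hz'.1.1
  refine (ENNReal.add_le_add_iff_left hMfin).1 ?_
  calc packVar p f M + packVar p f B ≤ packVar p f R :=
        packVar_add_packVar_le hMR (Rect.toSet_subset_toSet le_sup_right le_rfl le_rfl le_rfl) hdisj
    _ ≤ S 0 + γ / 2 := hS0 ▸ hRF
    _ ≤ S η + γ / 2 + γ / 2 := by gcongr; exact tsub_le_iff_right.1 hSη.1
    _ ≤ packVar p f M + γ / 2 + γ / 2 := by gcongr; exact sum_rpow_inc_leftPart_le hp hF _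
    _ = packVar p f M + γ := by rw [add_assoc, ENNReal.add_halves]

theorem tendsto_packVar_leftStrip (hp : 0 < p) (hf : ContinuousOn f R.toSet)
    (hR : packVar p f R ≠ ⊤) :
    Tendsto (fun η => packVar p f ⟨R.a, (R.a + η) ⊓ R.b, R.c, R.d⟩) (𝓝[>] 0) (𝓝 0) := by
  have hf' : ContinuousOn (fun z : ℝ × ℝ => f (-z.1, z.2)) (⟨-R.b, -R.a, R.c, R.d⟩ : Rect).toSet :=
    hf.comp (by fun_prop) fun z hz => ⟨⟨le_neg.1 hz.1.2, neg_le.1 hz.1.1⟩, hz.2⟩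
  refine (tendsto_packVar_rightStrip hp hf' (by rwa [packVar_comp_neg_fst])).congr fun η => ?_
  rw [← packVar_comp_neg_fst (f := f), neg_inf, neg_add']

theorem packVar_rpow_inv_le_split_snd (hp : 1 ≤ p) (R : Rect) (t : ℝ) :
    packVar p f R ^ p⁻¹ ≤
      packVar p f ⟨R.a, R.b, R.c, t⟩ ^ p⁻¹ + packVar p f ⟨R.a, R.b, t, R.d⟩ ^ p⁻¹ := by
  simpa only [packVar_comp_swap] using
    packVar_rpow_inv_le_split_fst (f := f ∘ Prod.swap) hp ⟨R.c, R.d, R.a, R.b⟩ t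

theorem packVar_rpow_inv_le_frame (hp : 1 ≤ p) (A B C D x₁ x₂ y₁ y₂ : ℝ) :
    packVar p f ⟨A, B, C, D⟩ ^ p⁻¹ ≤ packVar p f ⟨x₁, x₂, y₁, y₂⟩ ^ p⁻¹ +
      (packVar p f ⟨A, x₁, C, D⟩ ^ p⁻¹ + packVar p f ⟨x₂, B, C, D⟩ ^ p⁻¹ +
        packVar p f ⟨x₁, x₂, C, y₁⟩ ^ p⁻¹ + packVar p f ⟨x₁, x₂, y₂, D⟩ ^ p⁻¹) := by
  have h₁ := packVar_rpow_inv_le_split_fst (f := f) hp ⟨A, B, C, D⟩ x₁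
  have h₂ := packVar_rpow_inv_le_split_fst (f := f) hp ⟨x₁, B, C, D⟩ x₂
  have h₃ := packVar_rpow_inv_le_split_snd (f := f) hp ⟨x₁, x₂, C, D⟩ y₁
  have h₄ := packVar_rpow_inv_le_split_snd (f := f) hp ⟨x₁, x₂, y₁, D⟩ y₂
  dsimp only at h₁ h₂ h₃ h₄
  calc _ ≤ _ := h₁
    _ ≤ _ := add_le_add le_rfl (h₂.trans (add_le_add (h₃.trans (add_le_add le_rfl h₄)) le_rfl))
    _ = _ := by ring

theorem tendsto_packVar_rpow_inv_vStrip (hp : 1 ≤ p) (hf : ContinuousOn f R.toSet)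
    (hR : packVar p f R ≠ ⊤) {m : ℝ} (hm : m ∈ Icc R.a R.b) :
    Tendsto (fun ε => packVar p f ⟨(m - ε) ⊔ R.a, (m + ε) ⊓ R.b, R.c, R.d⟩ ^ p⁻¹)
      (𝓝[>] 0) (𝓝 0) := by
  have hp0 : 0 < p := zero_lt_one.trans_le hp
  have hl : (⟨R.a, m, R.c, R.d⟩ : Rect).toSet ⊆ R.toSet :=
    Rect.toSet_subset_toSet le_rfl hm.2 le_rfl le_rfl
  have hr : (⟨m, R.b, R.c, R.d⟩ : Rect).toSet ⊆ R.toSet :=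
    Rect.toSet_subset_toSet hm.1 le_rfl le_rfl le_rfl
  have hrpow : ∀ {u : ℝ → ℝ≥0∞}, Tendsto u (𝓝[>] 0) (𝓝 0) →
      Tendsto (fun ε => u ε ^ p⁻¹) (𝓝[>] 0) (𝓝 0) := fun hu => by
    simpa [Function.comp_def, ENNReal.zero_rpow_of_pos (inv_pos.2 hp0)] using
      ((ENNReal.continuous_rpow_const (y := p⁻¹)).tendsto 0).comp hu
  have hsum := (hrpow (tendsto_packVar_rightStrip hp0 (hf.mono hl)
      (ne_top_of_le_ne_top hR (packVar_mono hl)))).add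
    (hrpow (tendsto_packVar_leftStrip hp0 (hf.mono hr) (ne_top_of_le_ne_top hR (packVar_mono hr))))
  rw [add_zero] at hsum
  exact tendsto_of_tendsto_of_tendsto_of_le_of_le tendsto_const_nhds hsum (fun _ => zero_le)
    fun _ => packVar_rpow_inv_le_split_fst hp _ m

theorem tendsto_packVar_rpow_inv_hStrip (hp : 1 ≤ p) (hf : ContinuousOn f R.toSet)
    (hR : packVar p f R ≠ ⊤) {m : ℝ} (hm : m ∈ Icc R.c R.d) :
    Tendsto (fun ε => packVar p f ⟨R.a, R.b, (m - ε) ⊔ R.c, (m + ε) ⊓ R.d⟩ ^ p⁻¹)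
      (𝓝[>] 0) (𝓝 0) := by
  have hf' : ContinuousOn (f ∘ Prod.swap) (⟨R.c, R.d, R.a, R.b⟩ : Rect).toSet :=
    hf.comp continuous_swap.continuousOn fun z hz => ⟨hz.2, hz.1⟩
  simpa only [packVar_comp_swap] using
    tendsto_packVar_rpow_inv_vStrip hp hf' (by rwa [packVar_comp_swap]) hm

theorem packVar_rpow_inv_mem_Icc_of_frame_le (hp : 1 ≤ p) {a b c d a' b' c' d' : ℝ} {γ : ℝ≥0∞}
    (hγ : packVar p f ⟨a ⊓ a', a ⊔ a', c ⊓ c', d ⊔ d'⟩ ^ p⁻¹ +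
      packVar p f ⟨b ⊓ b', b ⊔ b', c ⊓ c', d ⊔ d'⟩ ^ p⁻¹ +
      packVar p f ⟨a ⊔ a', b ⊓ b', c ⊓ c', c ⊔ c'⟩ ^ p⁻¹ +
      packVar p f ⟨a ⊔ a', b ⊓ b', d ⊓ d', d ⊔ d'⟩ ^ p⁻¹ ≤ γ) :
    packVar p f ⟨a', b', c', d'⟩ ^ p⁻¹ ∈
      Icc (packVar p f ⟨a, b, c, d⟩ ^ p⁻¹ - γ) (packVar p f ⟨a, b, c, d⟩ ^ p⁻¹ + γ) := by
  have hmono : ∀ {Q R : Rect}, R.a ≤ Q.a → Q.b ≤ R.b → R.c ≤ Q.c → Q.d ≤ R.d →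
      packVar p f Q ^ p⁻¹ ≤ packVar p f R ^ p⁻¹ := fun ha hb hc hd =>
    ENNReal.rpow_le_rpow (packVar_mono (Rect.toSet_subset_toSet ha hb hc hd))
      (inv_nonneg.2 (zero_le_one.trans hp))
  have hKI : packVar p f ⟨a ⊓ a', b ⊔ b', c ⊓ c', d ⊔ d'⟩ ^ p⁻¹ ≤
      packVar p f ⟨a ⊔ a', b ⊓ b', c ⊔ c', d ⊓ d'⟩ ^ p⁻¹ + γ :=
    (packVar_rpow_inv_le_frame hp _ _ _ _ _ _ _ _).trans (add_le_add le_rfl hγ)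
  refine ⟨tsub_le_iff_right.2 ?_, ?_⟩
  · calc _ ≤ _ := hmono inf_le_left le_sup_left inf_le_left le_sup_left
      _ ≤ _ := hKI
      _ ≤ _ := add_le_add (hmono le_sup_right inf_le_right le_sup_right inf_le_right) le_rfl
  · calc _ ≤ _ := hmono inf_le_right le_sup_right inf_le_right le_sup_right
      _ ≤ _ := hKI
      _ ≤ _ := add_le_add (hmono le_sup_left inf_le_left le_sup_left inf_le_left) le_rfl

theorem continuousOn_packVar_rpow_inv (hp : 1 ≤ p) {T : ℝ}
    (hf : ContinuousOn f (Rect.mk 0 T 0 T).toSet) (hfin : packVar p f ⟨0, T, 0, T⟩ ≠ ⊤) :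
    ContinuousOn (fun x : ℝ × ℝ × ℝ × ℝ => packVar p f ⟨x.1, x.2.1, x.2.2.1, x.2.2.2⟩ ^ p⁻¹)
      (DeltaSq T) := by
  have hp0 : 0 < p := zero_lt_one.trans_le hp
  have hmono : ∀ {Q R : Rect}, R.a ≤ Q.a → Q.b ≤ R.b → R.c ≤ Q.c → Q.d ≤ R.d →
      packVar p f Q ^ p⁻¹ ≤ packVar p f R ^ p⁻¹ := fun ha hb hc hd =>
    ENNReal.rpow_le_rpow (packVar_mono (Rect.toSet_subset_toSet ha hb hc hd)) (inv_nonneg.2 hp0.le)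
  rintro ⟨a, b, c, d⟩ ⟨ha, hab, hb, hc, hcd, hd⟩
  refine (ENNReal.tendsto_nhds ((hmono ha hb hc hd).trans_lt
    (ENNReal.rpow_lt_top_of_nonneg (inv_nonneg.2 hp0.le) hfin)).ne).2 fun γ hγ => ?_
  have hstrip := fun {u : ℝ → ℝ≥0∞} (hu : Tendsto u (𝓝[>] 0) (𝓝 0)) =>
    ENNReal.tendsto_nhds_zero.1 hu (γ / 4) (ENNReal.div_pos hγ.ne' (by norm_num))
  obtain ⟨ε, hε, hεa, hεb, hεc, hεd⟩ := (eventually_mem_nhdsWithin.and <|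
    (hstrip (tendsto_packVar_rpow_inv_vStrip hp hf hfin (m := a) ⟨ha, hab.trans hb⟩)).and <|
    (hstrip (tendsto_packVar_rpow_inv_vStrip hp hf hfin (m := b) ⟨ha.trans hab, hb⟩)).and <|
    (hstrip (tendsto_packVar_rpow_inv_hStrip hp hf hfin (m := c) ⟨hc, hcd.trans hd⟩)).and
    (hstrip (tendsto_packVar_rpow_inv_hStrip hp hf hfin (m := d) ⟨hc.trans hcd, hd⟩))).exists
  filter_upwards [self_mem_nhdsWithin, nhdsWithin_le_nhds (Metric.ball_mem_nhds _ hε)]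
    with ⟨a', b', c', d'⟩ ⟨ha', hab', hb', hc', hcd', hd'⟩ hdist
  simp only [Metric.mem_ball, Prod.dist_eq, Real.dist_eq, max_lt_iff] at hdist
  refine packVar_rpow_inv_mem_Icc_of_frame_le hp ?_
  calc _ ≤ γ / 4 + γ / 4 + γ / 4 + γ / 4 := by
        gcongr
        · exact (hmono (by grind) (by grind) (by grind) (by grind)).trans hεa
        · exact (hmono (by grind) (by grind) (by grind) (by grind)).trans hεb
        · exact (hmono (by grind) (by grind) (by grind) (by grind)).trans hεc
        · exact (hmono (by grind) (by grind) (by grind) (by grind)).trans hεd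
    _ = γ / 4 * 4 := by ring
    _ = γ := ENNReal.div_mul_cancel (by norm_num) (by norm_num)

end PackVar

theorem exists_2D_control_dominating_general (p T : ℝ) (hp : 1 ≤ p)
    (f : ℝ × ℝ → ℝ) (hcont : ContinuousOn f (Rect.mk 0 T 0 T).toSet)
    (hf : cVarSum p f (Rect.mk 0 T 0 T) ≠ ⊤) :
    ∃ ω : Rect → ℝ≥0∞, Is2DControl T ω ∧
      ∀ R : Rect, R.Valid → R.toSet ⊆ (Rect.mk 0 T 0 T).toSet →
        ENNReal.ofReal |Rect.inc f R| ^ p ≤ ω R := by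
  have hp0 : 0 < p := zero_lt_one.trans_le hp
  have hfin : ∀ R : Rect, R.toSet ⊆ (Rect.mk 0 T 0 T).toSet → packVar p f R ≠ ⊤ := fun R hR =>
    ne_top_of_le_ne_top hf ((packVar_mono hR).trans (packVar_le_cVarSum p f _))
  refine ⟨packVar p f, ⟨hfin, ?_, fun R _ h => packVar_eq_zero_of_not_nondeg ?_,
    fun R _ _ P hP => ?_⟩, fun R hR _ => rpow_inc_le_packVar hp0 hR⟩
  · refine ((ENNReal.continuous_rpow_const (y := p)).comp_continuousOn
      (continuousOn_packVar_rpow_inv hp hcont (hfin _ subset_rfl))).congr fun x _ => ?_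
    simp [ENNReal.rpow_inv_rpow hp0.ne']
  · rintro ⟨hab, hcd⟩
    rcases h with h | h
    exacts [hab.ne h, hcd.ne h]
  · exact sum_packVar_le (Q := id) (fun Q hQ => hP.2.2 ▸ subset_biUnion_of_mem hQ) hP.2.1

/-- if `f : [0,T]² → ℝ` is continuous and of finite controlled
`p`-variation, then there is a 2D control `ω` with `|f(R)|^p ≤ ω R` for all
rectangles `R ⊆ [0,T]²`. -/
theorem exists_2D_control_dominating (p T : ℝ) (hp : 1 ≤ p) (hT : 0 < T)
    (f : ℝ × ℝ → ℝ) (hcont : ContinuousOn f (Rect.mk 0 T 0 T).toSet)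
    (hf : cVarSum p f (Rect.mk 0 T 0 T) ≠ ⊤) :
    ∃ ω : Rect → ℝ≥0∞, Is2DControl T ω ∧
      ∀ R : Rect, R.Valid → R.toSet ⊆ (Rect.mk 0 T 0 T).toSet →
        ENNReal.ofReal |Rect.inc f R| ^ p ≤ ω R :=
  exists_2D_control_dominating_general p T hp f hcont hf
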